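/- arXiv:1802.10531 — 2 statements merged into one kernel-verified Lean document; each statement's English description precedes it below -/
import Mathlib

section
/- Let n ≥ 1 and let π be a permutation of {1,…,n}. Let A be the free unital ℤ-algebra (free associative algebra) on the set of generators G = G_p ⊔ G_x, where G_p = { (i,j) : 1 ≤ i,j ≤ n, i < π(j) and j < π⁻¹(i) } with generators denoted p_{i,j}, and G_x = { (i,j) : 1 ≤ i < j ≤ n } with generators denoted x_{i,j}. Define the n×n matrix S over A by S_{π(j),j} = 1 for all j, S_{i,j} = p_{i,j} for (i,j) ∈ G_p, and S_{i,j} = 0 otherwise, and define the strictly upper triangular matrix X by X_{i,j} = x_{i,j} for i < j and X_{i,j} = 0 otherwise. Then the ℤ-subalgebra of A generated by the entries of the matrix product S·(I+X) is all of A. -/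
/-!
Write `M = S (1 + X)`, so `M i j = S i j + ∑_{m < j} S i m * X m j`. Row `π k` of `S` is
`1` at column `k` and `0` to its right, hence for `k < j` the entry `M (π k) j` equals
`X k j + ∑_{m < k} S (π k) m * X m j`. Solving these equations column by column (and, within
column `j`, for `X k j` by induction on `k`, then for `S i j`) expresses every entry of `S` and
of `X` as a noncommutative polynomial in entries of `M`, and every generator is such an entry.
-/

/-- Generators `p_{i,j}` indexed by positions with `i < π j` and `j < π⁻¹ i`. -/
abbrev GenP (n : ℕ) (π : Equiv.Perm (Fin n)) :=
  {ij : Fin n × Fin n // ij.1 < π ij.2 ∧ ij.2 < π.symm ij.1}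

/-- Generators `x_{i,j}` indexed by pairs `i < j`. -/
abbrev GenX (n : ℕ) := {ij : Fin n × Fin n // ij.1 < ij.2}

/-- The `π`-shaped matrix `S` over the free `ℤ`-algebra: `S (π j) j = 1`,
`S i j = p_{i,j}` for `(i,j)` with `i < π j` and `j < π⁻¹ i`, else `0`. -/
noncomputable def Smat (n : ℕ) (π : Equiv.Perm (Fin n)) :
    Matrix (Fin n) (Fin n) (FreeAlgebra ℤ (GenP n π ⊕ GenX n)) :=
  Matrix.of fun i j =>
    if i = π j then 1
    else if h : i < π j ∧ j < π.symm i then FreeAlgebra.ι ℤ (Sum.inl ⟨(i, j), h⟩)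
    else 0

/-- The strictly upper triangular matrix `X` with `X i j = x_{i,j}` for `i < j`. -/
noncomputable def Xmat (n : ℕ) (π : Equiv.Perm (Fin n)) :
    Matrix (Fin n) (Fin n) (FreeAlgebra ℤ (GenP n π ⊕ GenX n)) :=
  Matrix.of fun i j =>
    if h : i < j then FreeAlgebra.ι ℤ (Sum.inr ⟨(i, j), h⟩) else 0

namespace Matrix

variable {ι R σ : Type*} [Fintype ι] [LinearOrder ι] [Ring R] [SetLike σ R] [SubringClass σ R]
  {T : σ} {S X : Matrix ι ι R}

lemma mul_one_add_apply (i j : ι) : (S * (1 + X)) i j = S i j + ∑ m, S i m * X m j := by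
  rw [mul_add, mul_one, add_apply, mul_apply]

variable (e : Equiv.Perm ι) (hdiag : ∀ k, S (e k) k = 1) (hright : ∀ k m, k < m → S (e k) m = 0)
  (hX : ∀ i j, ¬ i < j → X i j = 0) (hM : ∀ i j, (S * (1 + X)) i j ∈ T)
include hdiag hright hX hM

lemma mem_right_col_of_mul_one_add_mem (j : ι) (hprev : ∀ m < j, ∀ i, S i m ∈ T) (k : ι) :
    X k j ∈ T := by
  induction k using WellFoundedLT.induction with
  | ind k ih =>
  by_cases hkj : k < j
  · have hrest : ∑ m ∈ Finset.univ.erase k, S (e k) m * X m j ∈ T := by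
      refine sum_mem fun m hm => ?_
      rcases lt_or_gt_of_ne (Finset.ne_of_mem_erase hm) with hmk | hkm
      · exact mul_mem (hprev m (hmk.trans hkj) _) (ih m hmk)
      · rw [hright k m hkm, zero_mul]
        exact zero_mem T
    have hrow : (S * (1 + X)) (e k) j = X k j + ∑ m ∈ Finset.univ.erase k, S (e k) m * X m j := by
      rw [mul_one_add_apply, hright k j hkj, zero_add,
        ← Finset.add_sum_erase _ _ (Finset.mem_univ k), hdiag, one_mul]
    simpa [hrow] using sub_mem (hM (e k) j) hrest
  · rw [hX k j hkj]
    exact zero_mem T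

lemma mem_left_col_of_mul_one_add_mem (j : ι) (hprev : ∀ m < j, ∀ i, S i m ∈ T) (i : ι) :
    S i j ∈ T := by
  have hsum : ∑ m, S i m * X m j ∈ T := by
    refine sum_mem fun m _ => ?_
    by_cases hmj : m < j
    · exact mul_mem (hprev m hmj i)
        (mem_right_col_of_mul_one_add_mem e hdiag hright hX hM j hprev m)
    · rw [hX m j hmj, mul_zero]
      exact zero_mem T
  simpa [mul_one_add_apply] using sub_mem (hM i j) hsum

theorem mem_of_mul_one_add_mem : (∀ i j, S i j ∈ T) ∧ ∀ i j, X i j ∈ T := by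
  have hS : ∀ j i, S i j ∈ T := fun j => by
    induction j using WellFoundedLT.induction with
    | ind j ih => exact mem_left_col_of_mul_one_add_mem e hdiag hright hX hM j ih
  exact ⟨fun i j => hS j i,
    fun i j => mem_right_col_of_mul_one_add_mem e hdiag hright hX hM j (fun m _ => hS m) i⟩

end Matrix

section

variable {n : ℕ} {π : Equiv.Perm (Fin n)}

lemma Smat_apply_perm_self (k : Fin n) : Smat n π (π k) k = 1 := by
  simp [Smat]

lemma Smat_apply_perm_of_lt {k m : Fin n} (hkm : k < m) : Smat n π (π k) m = 0 := by
  have hne : π k ≠ π m := π.injective.ne hkm.ne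
  have hgen : ¬(π k < π m ∧ m < π.symm (π k)) := by
    rw [Equiv.symm_apply_apply]
    exact fun h => h.2.not_gt hkm
  simp only [Smat, Matrix.of_apply, if_neg hne, dif_neg hgen]

lemma Smat_apply_of_genP {i j : Fin n} (h : i < π j ∧ j < π.symm i) :
    Smat n π i j = FreeAlgebra.ι ℤ (Sum.inl ⟨(i, j), h⟩) := by
  have hne : i ≠ π j := by
    rintro rfl
    exact (Equiv.symm_apply_apply π j ▸ h.2).false
  simp [Smat, hne, h]

lemma Xmat_apply_of_lt {i j : Fin n} (h : i < j) :
    Xmat n π i j = FreeAlgebra.ι ℤ (Sum.inr ⟨(i, j), h⟩) := by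
  simp [Xmat, h]

lemma Xmat_apply_of_not_lt {i j : Fin n} (h : ¬ i < j) : Xmat n π i j = 0 := by
  simp [Xmat, h]

end

theorem stmt_4_general (n : ℕ) (π : Equiv.Perm (Fin n)) :
    Algebra.adjoin ℤ
      (Set.range fun p : Fin n × Fin n => (Smat n π * (1 + Xmat n π)) p.1 p.2) = ⊤ := by
  set A := Algebra.adjoin ℤ
    (Set.range fun p : Fin n × Fin n => (Smat n π * (1 + Xmat n π)) p.1 p.2)
  have hM : ∀ i j, (Smat n π * (1 + Xmat n π)) i j ∈ A :=
    fun i j => Algebra.subset_adjoin ⟨(i, j), rfl⟩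
  obtain ⟨hS, hX⟩ := Matrix.mem_of_mul_one_add_mem π Smat_apply_perm_self
    (fun _ _ => Smat_apply_perm_of_lt) (fun _ _ => Xmat_apply_of_not_lt) hM
  rw [eq_top_iff, ← FreeAlgebra.adjoin_range_ι ℤ, Algebra.adjoin_le_iff]
  rintro _ ⟨⟨⟨i, j⟩, h⟩ | ⟨⟨i, j⟩, h⟩, rfl⟩
  · exact Smat_apply_of_genP h ▸ hS i j
  · exact Xmat_apply_of_lt (π := π) h ▸ hX i j

/-- The `ℤ`-subalgebra of the free algebra generated by the
entries of `S·(I+X)` is the whole algebra. -/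
theorem stmt_4 (n : ℕ) (hn : 1 ≤ n) (π : Equiv.Perm (Fin n)) :
    Algebra.adjoin ℤ
      (Set.range fun p : Fin n × Fin n => (Smat n π * (1 + Xmat n π)) p.1 p.2) = ⊤ :=
  stmt_4_general n π
end

section
/- Let s : ℤ → ℤ be a finitely supported function and let k ∈ ℤ satisfy k > |i| for every i in the support of s. Then X^{-k}(s) = −X^{k}(s). Consequently, for any function c : ℤ → ℤ with c_k = c_{-k} for all k, the partial sums Σ_{|k| ≤ N} c_k · X^k(s) form an eventually constant sequence in N. -/
/-! For `|i| < k` the weights `η^{-k}(i) = (-1)^(i+k)` and `η^k(i) = (-1)^(k-i+1)` differ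
exactly by a sign, because `i + k` and `k - i` have the same parity. Hence `X^{-j}(s) = -X^j(s)`
for every `j ≥ k`, and with symmetric weights `c` the terms `j` and `-j` of the partial sums
cancel once `N ≥ k`. -/

/-- The weight `η^k(l)`, equal to `(-1)^(l-k)` for `l ≥ k` and `(-1)^(l-k+1)`
for `l < k`. -/
def eta (k l : ℤ) : ℤ :=
  if k ≤ l then (-1) ^ (l - k).natAbs else (-1) ^ ((k - l).natAbs + 1)

/-- The shifted Euler characteristic
`X^k(s) = Σ_{l ≥ 0} (-1)^l s_{k+l} + Σ_{l < 0} (-1)^{l+1} s_{k+l} = Σ_l η^k(l) s_l`. -/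
noncomputable def Xchi (k : ℤ) (s : ℤ → ℤ) : ℤ := ∑ᶠ l : ℤ, eta k l * s l

open Finset

lemma eta_neg_of_abs_lt {k i : ℤ} (h : |i| < k) : eta (-k) i = -eta k i := by
  obtain ⟨hlo, hhi⟩ := abs_lt.mp h
  rw [eta, eta, if_pos (by omega), if_neg (by omega), pow_succ, mul_neg_one, neg_neg,
    neg_one_pow_eq_pow_mod_two, neg_one_pow_eq_pow_mod_two (n := (k - i).natAbs)]
  congr 1
  omega

lemma Xchi_eq_sum (k : ℤ) (s : ℤ →₀ ℤ) : Xchi k s = ∑ l ∈ s.support, eta k l * s l :=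
  finsum_eq_finsetSum_of_support_subset _ fun _ hl ↦
    Finsupp.mem_support_iff.mpr (right_ne_zero_of_mul hl)

lemma Xchi_neg_of_forall_abs_lt (s : ℤ →₀ ℤ) {k : ℤ} (hk : ∀ i ∈ s.support, |i| < k) :
    Xchi (-k) s = -Xchi k s := by
  rw [Xchi_eq_sum, Xchi_eq_sum, ← sum_neg_distrib]
  exact sum_congr rfl fun i hi ↦ by rw [eta_neg_of_abs_lt (hk i hi), neg_mul]

lemma sum_Icc_neg_succ {M : Type*} [AddCommMonoid M] (f : ℤ → M) (n : ℕ) :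
    ∑ j ∈ Icc (-((n + 1 : ℕ) : ℤ)) (n + 1 : ℕ), f j =
      f (-(n + 1)) + f (n + 1) + ∑ j ∈ Icc (-(n : ℤ)) n, f j := by
  have hIcc : Icc (-((n + 1 : ℕ) : ℤ)) (n + 1 : ℕ) =
      insert (-((n : ℤ) + 1)) (insert ((n : ℤ) + 1) (Icc (-(n : ℤ)) n)) := by
    ext x
    simp only [mem_Icc, mem_insert]
    omega
  rw [hIcc, sum_insert (by simp only [mem_insert, mem_Icc]; omega),
    sum_insert (by simp only [mem_Icc]; omega), add_assoc]

lemma sum_Icc_neg_eq_of_odd_gt {M : Type*} [AddCommGroup M] (f : ℤ → M) (n₀ : ℕ)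
    (hf : ∀ j : ℤ, n₀ < j → f (-j) = -f j) {n : ℕ} (hn : n₀ ≤ n) :
    ∑ j ∈ Icc (-(n : ℤ)) n, f j = ∑ j ∈ Icc (-(n₀ : ℤ)) n₀, f j := by
  induction n, hn using Nat.le_induction with
  | base => rfl
  | succ n hn ih =>
    rw [sum_Icc_neg_succ, ih, hf _ (by omega), neg_add_cancel, zero_add]

/-- If `k > |i|` for every `i` in the support of the finitely
supported function `s`, then `X^{-k}(s) = -X^k(s)`; consequently, for any
symmetric weights `c` (with `c_j = c_{-j}`) the partial sums
`Σ_{|j| ≤ N} c_j · X^j(s)` are eventually constant in `N`. -/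
theorem stmt_8 (s : ℤ →₀ ℤ) (k : ℤ) (hk : ∀ i ∈ s.support, |i| < k) :
    Xchi (-k) s = -Xchi k s ∧
    ∀ c : ℤ → ℤ, (∀ j : ℤ, c j = c (-j)) →
      ∃ N₀ : ℕ, ∀ N ≥ N₀,
        (∑ j ∈ Finset.Icc (-(N : ℤ)) (N : ℤ), c j * Xchi j s) =
        ∑ j ∈ Finset.Icc (-(N₀ : ℤ)) (N₀ : ℤ), c j * Xchi j s := by
  refine ⟨Xchi_neg_of_forall_abs_lt s hk, fun c hc ↦ ⟨k.toNat, fun N hN ↦ ?_⟩⟩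
  refine sum_Icc_neg_eq_of_odd_gt _ _ (fun j hj ↦ ?_) hN
  have hjk : ∀ i ∈ s.support, |i| < j := fun i hi ↦ (hk i hi).trans_le (by omega)
  rw [← hc, Xchi_neg_of_forall_abs_lt s hjk, mul_neg]
end
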